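/- For X ∈ ℝ^{m×n} and integer r < min{m,n}, the truncated nuclear norm ‖X‖_{∗,r} := Σ_{i=r+1}^{min{m,n}} σ_i(X) satisfies ‖X‖_{∗,r} = ‖X‖_∗ − sup{ tr(L X Rᵀ) : L ∈ ℝ^{r×m}, R ∈ ℝ^{r×n}, LLᵀ = I_r, RRᵀ = I_r }, where ‖X‖_∗ = Σ_i σ_i(X) is the nuclear norm. -/

import Mathlib

open Matrix

/-- The singular values of a real matrix `X` (square roots of the eigenvalues of `XᴴX`),
arranged in decreasing order, as a function `ℕ → ℝ` which is `0` from the number of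
columns onwards. -/
noncomputable def svals {I J : Type*} [Fintype I] [Fintype J] [DecidableEq J]
    (X : Matrix I J ℝ) : ℕ → ℝ := fun i =>
  let f : Fin (Fintype.card J) → ℝ := fun j =>
    Real.sqrt ((Matrix.isHermitian_conjTranspose_mul_self X).eigenvalues
      ((Fintype.equivFin J).symm j))
  if h : i < Fintype.card J then f (Tuple.sort f (Fin.rev ⟨i, h⟩)) else 0

/-!
Diagonalise `XᵀX` by an orthonormal basis `v j` with eigenvalues `σ j ^ 2`; with
`u j = σ j⁻¹ • X v j` (orthonormal once the zero vectors are dropped) this gives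
`X = ∑ σ j • u j v jᵀ`, hence `tr (L X Rᵀ) = ∑ σ j ⟪L u j, R v j⟫ ≤ ∑ σ j w j` with
`w j = (‖L u j‖² + ‖R v j‖²) / 2`. By Bessel's inequality the weights lie in `[0, 1]` and add up
to at most `r`, and for a decreasing nonnegative sequence such a weighted sum is at most the sum
of its first `r` terms. Taking for `R` the top `r` vectors `v j` and for `L` the corresponding
`u j`, completed to an orthonormal family, attains the bound, so the supremum is the Ky Fan
`r`-norm `∑_{i < r} σ_i`.
-/

open Finset

section DotProduct

variable {ι : Type*} [Fintype ι]

theorem dotProduct_self_nonneg (a : ι → ℝ) : 0 ≤ a ⬝ᵥ a :=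
  Finset.sum_nonneg fun i _ => mul_self_nonneg (a i)

theorem dotProduct_le_half_add (a b : ι → ℝ) : a ⬝ᵥ b ≤ (a ⬝ᵥ a + b ⬝ᵥ b) / 2 := by
  have h := dotProduct_self_nonneg (a - b)
  simp only [dotProduct_sub, sub_dotProduct, dotProduct_comm b a] at h
  linarith

theorem sum_sq_dotProduct_le {κ : Type*} [Fintype κ] {u : κ → ι → ℝ}
    (horth : Pairwise fun i j => u i ⬝ᵥ u j = 0) (hnorm : ∀ j, u j ⬝ᵥ u j ≤ 1) (x : ι → ℝ) :
    ∑ j, (x ⬝ᵥ u j) ^ 2 ≤ x ⬝ᵥ x := by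
  set c : κ → ℝ := fun j => x ⬝ᵥ u j
  set p : ι → ℝ := ∑ j, c j • u j with hp
  have hxp : x ⬝ᵥ p = ∑ j, c j ^ 2 := by
    simp only [p, dotProduct_sum, dotProduct_smul, smul_eq_mul, sq, c]
  have hpp : p ⬝ᵥ p ≤ ∑ j, c j ^ 2 := by
    have hcross : ∀ j, p ⬝ᵥ u j = c j * (u j ⬝ᵥ u j) := fun j => by
      rw [hp, sum_dotProduct, Finset.sum_eq_single j (fun i _ hij => by
        rw [smul_dotProduct, horth hij, smul_zero]) (by simp)]
      rw [smul_dotProduct, smul_eq_mul]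
    calc p ⬝ᵥ p = ∑ j, c j * (p ⬝ᵥ u j) := by
          nth_rw 2 [hp]
          rw [dotProduct_sum]
          simp only [dotProduct_smul, smul_eq_mul]
      _ = ∑ j, c j ^ 2 * (u j ⬝ᵥ u j) := by simp only [hcross, sq, mul_assoc]
      _ ≤ ∑ j, c j ^ 2 := Finset.sum_le_sum fun j _ =>
          mul_le_of_le_one_right (sq_nonneg _) (hnorm j)
  have h := dotProduct_self_nonneg (x - p)
  simp only [dotProduct_sub, sub_dotProduct, dotProduct_comm p x, hxp] at h
  linarith

end DotProduct

section RowOrthonormal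

variable {ρ ι : Type*} [Fintype ι]

theorem mul_transpose_self_eq_one_iff [DecidableEq ρ] {L : Matrix ρ ι ℝ} :
    L * Lᵀ = 1 ↔ ∀ k k', L k ⬝ᵥ L k' = if k = k' then 1 else 0 := by
  rw [← Matrix.ext_iff]
  simp only [mul_apply', one_apply]
  rfl

theorem pairwise_dotProduct_rows_eq_zero [DecidableEq ρ] {L : Matrix ρ ι ℝ}
    (hL : L * Lᵀ = 1) : Pairwise fun k k' => L k ⬝ᵥ L k' = 0 :=
  fun k k' h => by simp [mul_transpose_self_eq_one_iff.mp hL k k', h]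

theorem dotProduct_row_self [DecidableEq ρ] {L : Matrix ρ ι ℝ} (hL : L * Lᵀ = 1) (k : ρ) :
    L k ⬝ᵥ L k = 1 := by
  simp [mul_transpose_self_eq_one_iff.mp hL k k]

theorem mulVec_dotProduct_mulVec_self [Fintype ρ] (L : Matrix ρ ι ℝ) (a : ι → ℝ) :
    (L *ᵥ a) ⬝ᵥ (L *ᵥ a) = ∑ k, (a ⬝ᵥ L k) ^ 2 := by
  simp only [dotProduct, mulVec, sq, mul_comm (a _)]

theorem mulVec_dotProduct_mulVec_self_le [Fintype ρ] [DecidableEq ρ] {L : Matrix ρ ι ℝ}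
    (hL : L * Lᵀ = 1) (a : ι → ℝ) : (L *ᵥ a) ⬝ᵥ (L *ᵥ a) ≤ a ⬝ᵥ a := by
  rw [mulVec_dotProduct_mulVec_self]
  exact sum_sq_dotProduct_le (pairwise_dotProduct_rows_eq_zero hL)
    (fun k => (dotProduct_row_self hL k).le) a

theorem sum_mulVec_dotProduct_mulVec_self_le [Fintype ρ] [DecidableEq ρ] {κ : Type*}
    [Fintype κ] {L : Matrix ρ ι ℝ} (hL : L * Lᵀ = 1) {u : κ → ι → ℝ}
    (horth : Pairwise fun i j => u i ⬝ᵥ u j = 0) (hnorm : ∀ j, u j ⬝ᵥ u j ≤ 1) :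
    ∑ j, (L *ᵥ u j) ⬝ᵥ (L *ᵥ u j) ≤ Fintype.card ρ := by
  calc ∑ j, (L *ᵥ u j) ⬝ᵥ (L *ᵥ u j) = ∑ k, ∑ j, (L k ⬝ᵥ u j) ^ 2 := by
        simp only [mulVec_dotProduct_mulVec_self, dotProduct_comm (u _)]
        exact Finset.sum_comm
    _ ≤ ∑ k, L k ⬝ᵥ L k := Finset.sum_le_sum fun k _ => sum_sq_dotProduct_le horth hnorm (L k)
    _ = Fintype.card ρ := by simp [dotProduct_row_self hL]

theorem mul_transpose_eq_one_of_orthonormal [DecidableEq ρ] {b : ρ → EuclideanSpace ℝ ι}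
    (hb : Orthonormal ℝ b) : (of fun k => ⇑(b k)) * (of fun k => ⇑(b k))ᵀ = 1 := by
  refine mul_transpose_self_eq_one_iff.mpr fun k k' => ?_
  rw [← orthonormal_iff_ite.mp hb k k', EuclideanSpace.inner_eq_star_dotProduct, star_trivial,
    dotProduct_comm]
  rfl

theorem trace_mul_vecMulVec_mul_transpose [Fintype ρ] {κ : Type*} [Fintype κ]
    (L : Matrix ρ ι ℝ) (R : Matrix ρ κ ℝ) (u : ι → ℝ) (v : κ → ℝ) :
    (L * vecMulVec u v * Rᵀ).trace = (L *ᵥ u) ⬝ᵥ (R *ᵥ v) := by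
  rw [mul_vecMulVec, vecMulVec_mul, trace_vecMulVec, vecMul_transpose]

theorem mul_mul_transpose_apply {κ : Type*} [Fintype κ] (L : Matrix ρ ι ℝ) (X : Matrix ι κ ℝ)
    (R : Matrix ρ κ ℝ) (k k' : ρ) : (L * X * Rᵀ) k k' = L k ⬝ᵥ (X *ᵥ R k') := by
  rw [mul_apply', dotProduct_mulVec]
  rfl

end RowOrthonormal

theorem exists_orthonormal_eq_of_pairwise_inner_eq_zero {𝕜 E ρ : Type*} [RCLike 𝕜]
    [NormedAddCommGroup E] [InnerProductSpace 𝕜 E] [FiniteDimensional 𝕜 E] [Fintype ρ]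
    (hρ : Fintype.card ρ ≤ Module.finrank 𝕜 E) {u : ρ → E}
    (horth : Pairwise fun i j => inner 𝕜 (u i) (u j) = 0) (hnorm : ∀ i, u i ≠ 0 → ‖u i‖ = 1) :
    ∃ b : ρ → E, Orthonormal 𝕜 b ∧ ∀ i, u i ≠ 0 → b i = u i := by
  -- pad the index type so that it can index an orthonormal basis of `E`
  let v : ρ ⊕ Fin (Module.finrank 𝕜 E - Fintype.card ρ) → E := Sum.elim u 0
  have hv : Orthonormal 𝕜 ((Sum.inl '' {i | u i ≠ 0}).domRestrict v) := by
    refine ⟨?_, ?_⟩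
    · rintro ⟨_, i, hi, rfl⟩
      exact hnorm i hi
    · rintro ⟨_, i, hi, rfl⟩ ⟨_, j, hj, rfl⟩ hij
      exact horth fun h => hij (by subst h; rfl)
  obtain ⟨b, hb⟩ := hv.exists_orthonormalBasis_extension_of_card_eq (by simp; omega)
  exact ⟨b ∘ Sum.inl, b.orthonormal.comp _ Sum.inl_injective,
    fun i hi => hb _ ⟨i, hi, rfl⟩⟩

theorem sum_mul_le_sum_range_of_antitone {s : ℕ → ℝ} (hs : Antitone s) {r N : ℕ}
    (hrN : r ≤ N) (hsr : 0 ≤ s r) {w : Fin N → ℝ} (hw₀ : ∀ i, 0 ≤ w i) (hw₁ : ∀ i, w i ≤ 1)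
    (hw : ∑ i, w i ≤ r) : ∑ i : Fin N, s i * w i ≤ ∑ i ∈ range r, s i := by
  have hterm : ∀ i : Fin N, (s i - s r) * w i ≤ if (i : ℕ) < r then s i - s r else 0 := by
    intro i
    split_ifs with hi
    · exact mul_le_of_le_one_right (sub_nonneg.mpr (hs hi.le)) (hw₁ i)
    · exact mul_nonpos_of_nonpos_of_nonneg (sub_nonpos.mpr (hs (not_lt.mp hi))) (hw₀ i)
  have hcut :
      ∑ i : Fin N, (if (i : ℕ) < r then s i - s r else 0) = ∑ i ∈ range r, (s i - s r) := by
    rw [Fin.sum_univ_eq_sum_range (fun i => if i < r then s i - s r else 0), ← sum_filter]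
    congr 1
    ext i
    simp only [mem_filter, mem_range]
    omega
  -- adding `s r * (r - ∑ i, w i) ≥ 0` reduces the claim to the termwise bound `hterm`
  calc ∑ i : Fin N, s i * w i ≤ ∑ i : Fin N, s i * w i + s r * (r - ∑ i, w i) :=
        le_add_of_nonneg_right (mul_nonneg hsr (sub_nonneg.mpr hw))
    _ = ∑ i : Fin N, (s i - s r) * w i + r * s r := by
        simp only [sub_mul, sum_sub_distrib, mul_sub, mul_sum]
        ring
    _ ≤ ∑ i ∈ range r, (s i - s r) + r * s r := by
        gcongr
        exact hcut ▸ Finset.sum_le_sum fun i _ => hterm i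
    _ = ∑ i ∈ range r, s i := by simp [sum_sub_distrib]

section SingularValueDecomposition

variable {ι κ : Type*} [Fintype ι] [Fintype κ] [DecidableEq κ] (X : Matrix ι κ ℝ)

noncomputable def rightSingularVector (j : κ) : κ → ℝ :=
  ⇑((isHermitian_conjTranspose_mul_self X).eigenvectorBasis j)

noncomputable def singularValue (j : κ) : ℝ :=
  √((isHermitian_conjTranspose_mul_self X).eigenvalues j)

/-- Equal to `0` when `singularValue X j = 0`, since `0⁻¹ = 0`. -/
noncomputable def leftSingularVector (j : κ) : ι → ℝ :=
  (singularValue X j)⁻¹ • (X *ᵥ rightSingularVector X j)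

theorem singularValue_nonneg (j : κ) : 0 ≤ singularValue X j := Real.sqrt_nonneg _

theorem singularValue_sq (j : κ) :
    singularValue X j ^ 2 = (isHermitian_conjTranspose_mul_self X).eigenvalues j :=
  Real.sq_sqrt (eigenvalues_conjTranspose_mul_self_nonneg X j)

theorem rightSingularVector_dotProduct (i j : κ) :
    rightSingularVector X i ⬝ᵥ rightSingularVector X j = if i = j then 1 else 0 := by
  rw [← orthonormal_iff_ite.mp (isHermitian_conjTranspose_mul_self X).eigenvectorBasis.orthonormal,
    EuclideanSpace.inner_eq_star_dotProduct, star_trivial, dotProduct_comm]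
  rfl

theorem pairwise_rightSingularVector_dotProduct_eq_zero :
    Pairwise fun i j => rightSingularVector X i ⬝ᵥ rightSingularVector X j = 0 :=
  fun i j h => by simp [rightSingularVector_dotProduct, h]

theorem rightSingularVector_dotProduct_self (j : κ) :
    rightSingularVector X j ⬝ᵥ rightSingularVector X j = 1 := by
  rw [rightSingularVector_dotProduct, if_pos rfl]

theorem mulVec_rightSingularVector_dotProduct (i j : κ) :
    (X *ᵥ rightSingularVector X i) ⬝ᵥ (X *ᵥ rightSingularVector X j) =
      if i = j then singularValue X j ^ 2 else 0 := by
  have hXtX : Xᵀ *ᵥ (X *ᵥ rightSingularVector X j) =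
      singularValue X j ^ 2 • rightSingularVector X j := by
    rw [singularValue_sq, mulVec_mulVec, ← conjTranspose_eq_transpose_of_trivial]
    exact (isHermitian_conjTranspose_mul_self X).mulVec_eigenvectorBasis j
  rw [dotProduct_comm, dotProduct_mulVec, ← mulVec_transpose, dotProduct_comm, hXtX,
    dotProduct_smul, rightSingularVector_dotProduct, smul_eq_mul, mul_ite, mul_one, mul_zero]

theorem mulVec_rightSingularVector (j : κ) :
    X *ᵥ rightSingularVector X j = singularValue X j • leftSingularVector X j := by
  by_cases h : singularValue X j = 0
  · have : (X *ᵥ rightSingularVector X j) ⬝ᵥ (X *ᵥ rightSingularVector X j) = 0 := by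
      rw [mulVec_rightSingularVector_dotProduct, if_pos rfl, h, sq, mul_zero]
    rw [dotProduct_self_eq_zero.mp this, h, zero_smul]
  · rw [leftSingularVector, smul_smul, mul_inv_cancel₀ h, one_smul]

theorem leftSingularVector_dotProduct (i j : κ) :
    leftSingularVector X i ⬝ᵥ leftSingularVector X j =
      if i = j ∧ singularValue X j ≠ 0 then 1 else 0 := by
  rw [leftSingularVector, leftSingularVector, smul_dotProduct, dotProduct_smul,
    mulVec_rightSingularVector_dotProduct]
  by_cases hij : i = j
  · subst hij
    by_cases h : singularValue X i = 0
    · simp [h]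
    · rw [if_pos rfl, if_pos ⟨rfl, h⟩, smul_eq_mul, smul_eq_mul]
      field_simp
  · simp [hij]

theorem pairwise_leftSingularVector_dotProduct_eq_zero :
    Pairwise fun i j => leftSingularVector X i ⬝ᵥ leftSingularVector X j = 0 :=
  fun i j h => by simp [leftSingularVector_dotProduct, h]

theorem leftSingularVector_eq_zero {j : κ} (h : singularValue X j = 0) :
    leftSingularVector X j = 0 := by
  rw [leftSingularVector, h, _root_.inv_zero, zero_smul]

theorem leftSingularVector_dotProduct_self {j : κ} (h : singularValue X j ≠ 0) :
    leftSingularVector X j ⬝ᵥ leftSingularVector X j = 1 := by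
  rw [leftSingularVector_dotProduct, if_pos ⟨rfl, h⟩]

theorem leftSingularVector_ne_zero {j : κ} (h : singularValue X j ≠ 0) :
    leftSingularVector X j ≠ 0 := fun h0 => by
  simpa [h0] using leftSingularVector_dotProduct_self X h

theorem leftSingularVector_dotProduct_self_le_one (j : κ) :
    leftSingularVector X j ⬝ᵥ leftSingularVector X j ≤ 1 := by
  rw [leftSingularVector_dotProduct]
  split_ifs <;> norm_num

theorem eq_sum_singularValue_smul_vecMulVec :
    X = ∑ j, singularValue X j • vecMulVec (leftSingularVector X j) (rightSingularVector X j) := by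
  ext i i'
  have hrow := congr(WithLp.ofLp
    $((isHermitian_conjTranspose_mul_self X).eigenvectorBasis.sum_repr' (WithLp.toLp 2 (X i))) i')
  have hcoef (j : κ) :
      singularValue X j * leftSingularVector X j i = X i ⬝ᵥ rightSingularVector X j :=
    congrFun (mulVec_rightSingularVector X j).symm i
  simp only [WithLp.ofLp_sum, WithLp.ofLp_smul, EuclideanSpace.inner_eq_star_dotProduct,
    star_trivial, Finset.sum_apply, Pi.smul_apply, smul_eq_mul] at hrow
  simp only [Matrix.sum_apply, Matrix.smul_apply, vecMulVec_apply, smul_eq_mul, ← mul_assoc, hcoef]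
  exact hrow.symm

theorem trace_mul_mul_transpose_eq_sum {ρ : Type*} [Fintype ρ] (L : Matrix ρ ι ℝ)
    (R : Matrix ρ κ ℝ) :
    (L * X * Rᵀ).trace = ∑ j, singularValue X j *
      ((L *ᵥ leftSingularVector X j) ⬝ᵥ (R *ᵥ rightSingularVector X j)) := by
  conv_lhs => rw [eq_sum_singularValue_smul_vecMulVec X]
  simp only [Matrix.mul_sum, Matrix.sum_mul, trace_sum, Matrix.mul_smul, Matrix.smul_mul,
    trace_smul, trace_mul_vecMulVec_mul_transpose, smul_eq_mul]

noncomputable def svalsEquiv : Fin (Fintype.card κ) ≃ κ :=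
  Fin.revPerm.trans
    ((Tuple.sort (singularValue X ∘ (Fintype.equivFin κ).symm)).trans (Fintype.equivFin κ).symm)

theorem svals_eq_singularValue (i : Fin (Fintype.card κ)) :
    svals X i = singularValue X (svalsEquiv X i) := by
  rw [svals, dif_pos i.isLt]
  rfl

theorem svals_of_le {i : ℕ} (h : Fintype.card κ ≤ i) : svals X i = 0 := by
  rw [svals, dif_neg (not_lt.mpr h)]

theorem svals_nonneg (i : ℕ) : 0 ≤ svals X i := by
  rcases lt_or_ge i (Fintype.card κ) with h | h
  · exact (svals_eq_singularValue X ⟨i, h⟩).symm ▸ singularValue_nonneg X _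
  · exact (svals_of_le X h).ge

theorem svals_antitone : Antitone (svals X) := by
  intro i i' hii'
  rcases lt_or_ge i' (Fintype.card κ) with h' | h'
  · rw [svals_eq_singularValue X ⟨i, hii'.trans_lt h'⟩, svals_eq_singularValue X ⟨i', h'⟩]
    exact Tuple.monotone_sort (singularValue X ∘ (Fintype.equivFin κ).symm)
      (Fin.rev_le_rev.mpr (Fin.mk_le_mk.mpr hii'))
  · exact svals_of_le X h' ▸ svals_nonneg X i

theorem trace_mul_mul_transpose_le_sum_svals {ρ : Type*} [Fintype ρ] [DecidableEq ρ]
    (hρ : Fintype.card ρ ≤ Fintype.card κ) {L : Matrix ρ ι ℝ} {R : Matrix ρ κ ℝ}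
    (hL : L * Lᵀ = 1) (hR : R * Rᵀ = 1) :
    (L * X * Rᵀ).trace ≤ ∑ i ∈ range (Fintype.card ρ), svals X i := by
  set u := leftSingularVector X
  set v := rightSingularVector X
  -- `⟪L u j, R v j⟫ ≤ w j` by AM-GM; Bessel's inequality puts the weights in `[0, 1]` with sum
  -- at most `card ρ`
  set w : κ → ℝ := fun j => ((L *ᵥ u j) ⬝ᵥ (L *ᵥ u j) + (R *ᵥ v j) ⬝ᵥ (R *ᵥ v j)) / 2
  have hw₀ (j : κ) : 0 ≤ w j := by
    have := dotProduct_self_nonneg (L *ᵥ u j)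
    have := dotProduct_self_nonneg (R *ᵥ v j)
    simp only [w]
    linarith
  have hw₁ (j : κ) : w j ≤ 1 := by
    have := (mulVec_dotProduct_mulVec_self_le hL (u j)).trans
      (leftSingularVector_dotProduct_self_le_one X j)
    have := (mulVec_dotProduct_mulVec_self_le hR (v j)).trans
      (rightSingularVector_dotProduct_self X j).le
    simp only [w]
    linarith
  have hw : ∑ j, w j ≤ Fintype.card ρ := by
    have := sum_mulVec_dotProduct_mulVec_self_le hL
      (pairwise_leftSingularVector_dotProduct_eq_zero X)
      (leftSingularVector_dotProduct_self_le_one X)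
    have := sum_mulVec_dotProduct_mulVec_self_le hR
      (pairwise_rightSingularVector_dotProduct_eq_zero X)
      (fun j => (rightSingularVector_dotProduct_self X j).le)
    simp only [w, ← sum_div, sum_add_distrib]
    linarith
  calc (L * X * Rᵀ).trace = ∑ j, singularValue X j * ((L *ᵥ u j) ⬝ᵥ (R *ᵥ v j)) :=
        trace_mul_mul_transpose_eq_sum X L R
    _ ≤ ∑ j, singularValue X j * w j := sum_le_sum fun j _ =>
        mul_le_mul_of_nonneg_left (dotProduct_le_half_add _ _) (singularValue_nonneg X j)
    _ = ∑ i : Fin (Fintype.card κ), svals X i * w (svalsEquiv X i) := by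
        rw [← (svalsEquiv X).sum_comp]
        simp only [svals_eq_singularValue]
    _ ≤ ∑ i ∈ range (Fintype.card ρ), svals X i :=
        sum_mul_le_sum_range_of_antitone (svals_antitone X) hρ (svals_nonneg X _)
          (fun _ => hw₀ _) (fun _ => hw₁ _) ((svalsEquiv X).sum_comp w ▸ hw)

theorem exists_mul_transpose_eq_one_row_eq_leftSingularVector {ρ : Type*} [Fintype ρ]
    [DecidableEq ρ] (hρ : Fintype.card ρ ≤ Fintype.card ι) {e : ρ → κ}
    (he : Function.Injective e) :
    ∃ L : Matrix ρ ι ℝ, L * Lᵀ = 1 ∧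
      ∀ k, singularValue X (e k) ≠ 0 → L k = leftSingularVector X (e k) := by
  set u : ρ → EuclideanSpace ℝ ι := fun k => WithLp.toLp 2 (leftSingularVector X (e k))
  have hu_inner (k k' : ρ) :
      inner ℝ (u k) (u k') = leftSingularVector X (e k) ⬝ᵥ leftSingularVector X (e k') := by
    rw [EuclideanSpace.inner_eq_star_dotProduct, star_trivial, dotProduct_comm]
  have hu_ne_zero {k : ρ} (h : singularValue X (e k) ≠ 0) : u k ≠ 0 :=
    fun h0 => leftSingularVector_ne_zero X h (congrArg WithLp.ofLp h0)
  have hσ {k : ρ} (hk : u k ≠ 0) : singularValue X (e k) ≠ 0 := fun h =>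
    hk (by simp only [u, leftSingularVector_eq_zero X h, WithLp.toLp_zero])
  obtain ⟨b, hb, hbu⟩ := exists_orthonormal_eq_of_pairwise_inner_eq_zero
    (by simpa [finrank_euclideanSpace] using hρ)
    (fun k k' h => (hu_inner k k').trans
      (pairwise_leftSingularVector_dotProduct_eq_zero X (he.ne h)))
    (fun k hk => by
      rw [← pow_eq_one_iff_of_nonneg (norm_nonneg _) two_ne_zero, ← real_inner_self_eq_norm_sq,
        hu_inner, leftSingularVector_dotProduct_self X (hσ hk)])
  exact ⟨of fun k => ⇑(b k), mul_transpose_eq_one_of_orthonormal hb,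
    fun k h => congrArg WithLp.ofLp (hbu k (hu_ne_zero h))⟩

theorem exists_trace_mul_mul_transpose_eq_sum_svals {r : ℕ} (hrι : r ≤ Fintype.card ι)
    (hrκ : r ≤ Fintype.card κ) :
    ∃ L : Matrix (Fin r) ι ℝ, ∃ R : Matrix (Fin r) κ ℝ,
      L * Lᵀ = 1 ∧ R * Rᵀ = 1 ∧ (L * X * Rᵀ).trace = ∑ i ∈ range r, svals X i := by
  set e : Fin r → κ := fun k => svalsEquiv X (Fin.castLE hrκ k)
  have he : Function.Injective e := (svalsEquiv X).injective.comp (Fin.castLE_injective hrκ)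
  obtain ⟨L, hL, hLu⟩ :=
    exists_mul_transpose_eq_one_row_eq_leftSingularVector X (by simpa using hrι) he
  set R : Matrix (Fin r) κ ℝ := of fun k => rightSingularVector X (e k)
  have hR : R * Rᵀ = 1 := mul_transpose_self_eq_one_iff.mpr fun k k' => by
    show rightSingularVector X (e k) ⬝ᵥ rightSingularVector X (e k') = _
    simp only [rightSingularVector_dotProduct, he.eq_iff]
  have hdiag (k : Fin r) : (L * X * Rᵀ) k k = singularValue X (e k) := by
    rw [mul_mul_transpose_apply, show R k = rightSingularVector X (e k) from rfl,
      mulVec_rightSingularVector, dotProduct_smul, smul_eq_mul]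
    by_cases h : singularValue X (e k) = 0
    · rw [h, zero_mul]
    · rw [hLu k h, leftSingularVector_dotProduct_self X h, mul_one]
  refine ⟨L, R, hL, hR, ?_⟩
  rw [trace, ← Fin.sum_univ_eq_sum_range]
  exact sum_congr rfl fun k _ => (hdiag k).trans (svals_eq_singularValue X (Fin.castLE hrκ k)).symm

end SingularValueDecomposition

/-- The truncated nuclear norm `Σ_{i>r} σ_i(X)` equals the nuclear norm minus the
supremum of `tr(L X Rᵀ)` over all partial isometries `L`, `R` with `r` orthonormal
rows (this supremum being the Ky Fan `r`-norm). -/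
theorem stmt_10 {m n r : ℕ} (hr : r < min m n) (X : Matrix (Fin m) (Fin n) ℝ) :
    (∑ i ∈ Finset.Ico r n, svals X i) =
      (∑ i ∈ Finset.range n, svals X i) -
        sSup {t : ℝ | ∃ L : Matrix (Fin r) (Fin m) ℝ, ∃ R : Matrix (Fin r) (Fin n) ℝ,
          L * Lᵀ = 1 ∧ R * Rᵀ = 1 ∧ t = (L * X * Rᵀ).trace} := by
  have hrm : r ≤ m := (lt_min_iff.mp hr).1.le
  have hrn : r ≤ n := (lt_min_iff.mp hr).2.le
  have hsup : IsGreatest {t : ℝ | ∃ L : Matrix (Fin r) (Fin m) ℝ, ∃ R : Matrix (Fin r) (Fin n) ℝ,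
      L * Lᵀ = 1 ∧ R * Rᵀ = 1 ∧ t = (L * X * Rᵀ).trace} (∑ i ∈ range r, svals X i) := by
    refine ⟨?_, ?_⟩
    · obtain ⟨L, R, hL, hR, htr⟩ :=
        exists_trace_mul_mul_transpose_eq_sum_svals X (by simpa using hrm) (by simpa using hrn)
      exact ⟨L, R, hL, hR, htr.symm⟩
    · rintro t ⟨L, R, hL, hR, rfl⟩
      simpa using trace_mul_mul_transpose_le_sum_svals X (by simpa using hrn) hL hR
  rw [hsup.csSup_eq, ← sum_range_add_sum_Ico _ hrn]
  ring
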